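/- There exists a universal constant C > 0 with the following property. For every p ∈ [1, ∞], every ε ∈ (0, 1], and all bounded measurable maps u, w : 𝕋² → ℝ², writing û(x) = (u₁(x), u₂(x), 0) ∈ ℝ³ and ŵ(x) = (w₁(x), w₂(x), 0) ∈ ℝ³, one has ‖ x ↦ ‖ (M_{ε ŵ(x)} − M_{ε û(x)}) / (ε √(M₀)) ‖_{L²(ℝ³)} ‖_{L^p(𝕋²)} ≤ C · ‖w − u‖_{L^p(𝕋²)} · exp(ε² ‖u − w‖²_{L^∞(𝕋²)} + ε² ‖w‖²_{L^∞(𝕋²)}), where the inner L²(ℝ³) norm is taken in the velocity variable v. -/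

import Mathlib

/-!
Dividing by `√M₀` turns Maxwellians into Gaussians with explicit `L²(ℝ³)` inner products:
`M_b M_{b'} / M₀ = e^{⟪b, b'⟫} M_{b + b'}`, so
`‖(M_b - M_{b'}) / √M₀‖²_{L²} = e^{‖b‖²} + e^{‖b'‖²} - 2 e^{⟪b, b'⟫}`.
Writing `b' = b + d` and `s = ⟪b, d⟫`, this is `e^{‖b‖²} ((e^s - 1)² + e^{2s} (e^{‖d‖²} - 1))`,
and `|s| ≤ ‖b‖ ‖d‖` bounds it by `3 ‖d‖² e^{2‖d‖² + 2‖b‖²}`. For `b = ε ŵ(x)`, `b' = ε û(x)`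
the velocity norm is thus at most `√3 |w(x) - u(x)|` times the `L^∞` exponential for a.e. `x`,
and the `L^p` bound follows with `C = √3`.
-/

open MeasureTheory
open scoped ENNReal

/-- The flat torus `𝕋² = ℝ²/ℤ²` is modelled by `ℤ²`-periodic functions on `ℝ × ℝ`,
with integration over the fundamental domain `[0,1]²` (total mass 1). -/
noncomputable def μT : Measure (ℝ × ℝ) := volume.restrict (Set.Icc ((0:ℝ), (0:ℝ)) (1, 1))

/-- `ℤ²`-periodicity. -/
def ZZper {α : Type*} (f : ℝ × ℝ → α) : Prop :=
  ∀ (x : ℝ × ℝ) (m n : ℤ), f (x + ((m : ℝ), (n : ℝ))) = f x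

/-- `ℝ²` and `ℝ³` with the Euclidean norm. -/
abbrev E2 : Type := EuclideanSpace ℝ (Fin 2)
abbrev E3 : Type := EuclideanSpace ℝ (Fin 3)

/-- The Maxwellian `M_b(v) = (2π)^{-3/2} exp(-|v-b|²/2)`. -/
noncomputable def maxw (b v : E3) : ℝ :=
  (2 * Real.pi) ^ (-(3:ℝ)/2) * Real.exp (-‖v - b‖ ^ 2 / 2)

/-- The embedding `(a₁, a₂) ↦ (a₁, a₂, 0)` of `ℝ²` into `ℝ³`. -/
noncomputable def emb (a : E2) : E3 :=
  EuclideanSpace.single 0 (a 0) + EuclideanSpace.single 1 (a 1)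

open Real
open scoped RealInnerProductSpace

lemma toReal_eLpNorm_two_eq_sqrt_integral_sq {α : Type*} [MeasurableSpace α] {μ : Measure α}
    {f : α → ℝ} (hf : AEStronglyMeasurable f μ) (hf2 : Integrable (fun x => f x ^ 2) μ) :
    (eLpNorm f 2 μ).toReal = √(∫ x, f x ^ 2 ∂μ) := by
  rw [((memLp_two_iff_integrable_sq hf).2 hf2).eLpNorm_eq_integral_rpow_norm two_ne_zero
    ENNReal.ofNat_ne_top, ENNReal.toReal_ofReal (by positivity), sqrt_eq_rpow]
  simp

lemma integral_maxw (b : E3) : ∫ v, maxw b v = 1 := by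
  have hgauss : (fun v : E3 => rexp (-‖v‖ ^ 2 / 2)) = fun v => rexp (-(1 / 2) * ‖v‖ ^ 2) := by
    ext v; ring_nf
  simp only [maxw]
  rw [integral_const_mul, integral_sub_right_eq_self (fun v : E3 => rexp (-‖v‖ ^ 2 / 2)) b,
    hgauss, GaussianFourier.integral_rexp_neg_mul_sq_norm (by norm_num),
    finrank_euclideanSpace_fin, show π / (1 / 2) = 2 * π by ring, ← rpow_add (by positivity)]
  norm_num

@[fun_prop]
lemma integrable_maxw (b : E3) : Integrable (maxw b) :=
  .of_integral_ne_zero (by rw [integral_maxw]; exact one_ne_zero)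

lemma maxw_mul_maxw_div_maxw_zero (b b' v : E3) :
    maxw b v * maxw b' v / maxw 0 v = rexp ⟪b, b'⟫ * maxw (b + b') v := by
  have hexp : rexp (-‖v - b‖ ^ 2 / 2) * rexp (-‖v - b'‖ ^ 2 / 2) / rexp (-‖v‖ ^ 2 / 2)
      = rexp ⟪b, b'⟫ * rexp (-‖v - (b + b')‖ ^ 2 / 2) := by
    rw [← exp_add, ← exp_sub, ← exp_add]
    congr 1
    rw [norm_sub_sq_real, norm_sub_sq_real, norm_sub_sq_real, norm_add_sq_real, inner_add_right]
    ring
  simp only [maxw, sub_zero]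
  rw [mul_mul_mul_comm, mul_div_mul_comm, mul_div_assoc, hexp, div_self (by positivity)]
  ring

lemma sq_maxw_sub_div_mul_sqrt (ε : ℝ) (b b' v : E3) :
    ((maxw b v - maxw b' v) / (ε * √(maxw 0 v))) ^ 2
      = ε⁻¹ ^ 2 * (rexp ⟪b, b⟫ * maxw (b + b) v - 2 * (rexp ⟪b, b'⟫ * maxw (b + b') v)
          + rexp ⟪b', b'⟫ * maxw (b' + b') v) := by
  have h0 : 0 < maxw 0 v := by unfold maxw; positivity
  rw [← maxw_mul_maxw_div_maxw_zero, ← maxw_mul_maxw_div_maxw_zero,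
    ← maxw_mul_maxw_div_maxw_zero, div_pow, mul_pow, sq_sqrt h0.le]
  field_simp
  ring

lemma integrable_sq_maxw_sub_div_mul_sqrt (ε : ℝ) (b b' : E3) :
    Integrable fun v => ((maxw b v - maxw b' v) / (ε * √(maxw 0 v))) ^ 2 := by
  simp_rw [sq_maxw_sub_div_mul_sqrt]
  fun_prop

lemma integral_sq_maxw_sub_div_mul_sqrt (ε : ℝ) (b b' : E3) :
    ∫ v, ((maxw b v - maxw b' v) / (ε * √(maxw 0 v))) ^ 2
      = ε⁻¹ ^ 2 * (rexp (‖b‖ ^ 2) + rexp (‖b'‖ ^ 2) - 2 * rexp ⟪b, b'⟫) := by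
  simp_rw [sq_maxw_sub_div_mul_sqrt]
  rw [integral_const_mul, integral_add, integral_sub, integral_const_mul, integral_const_mul,
    integral_const_mul, integral_const_mul, integral_maxw, integral_maxw, integral_maxw,
    real_inner_self_eq_norm_sq, real_inner_self_eq_norm_sq]
  · ring
  all_goals fun_prop

lemma toReal_eLpNorm_maxw_sub_div_mul_sqrt (ε : ℝ) (b b' : E3) :
    (eLpNorm (fun v => (maxw b v - maxw b' v) / (ε * √(maxw 0 v))) 2).toReal
      = |ε|⁻¹ * √(rexp (‖b‖ ^ 2) + rexp (‖b'‖ ^ 2) - 2 * rexp ⟪b, b'⟫) := by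
  have hmeas : Measurable fun v => (maxw b v - maxw b' v) / (ε * √(maxw 0 v)) := by
    unfold maxw; fun_prop
  rw [toReal_eLpNorm_two_eq_sqrt_integral_sq hmeas.aestronglyMeasurable
    (integrable_sq_maxw_sub_div_mul_sqrt ε b b'), integral_sq_maxw_sub_div_mul_sqrt,
    sqrt_mul (by positivity), sqrt_sq_eq_abs, abs_inv]

lemma abs_exp_sub_one_le_abs_mul_exp_abs (s : ℝ) : |rexp s - 1| ≤ |s| * rexp |s| := by
  rcases le_or_gt 0 s with hs | hs
  · rw [abs_of_nonneg (sub_nonneg.2 (one_le_exp hs)), abs_of_nonneg hs]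
    have h := add_one_le_exp (-s)
    rw [exp_neg] at h
    have := exp_pos s
    field_simp at h
    nlinarith
  · rw [abs_of_nonpos (sub_nonpos.2 (exp_le_one_iff.2 hs.le)), abs_of_neg hs]
    nlinarith [add_one_le_exp s, one_le_exp (neg_nonneg.2 hs.le)]

lemma one_add_exp_sub_two_exp_le {a t s : ℝ} (ha : 0 ≤ a) (ht : 0 ≤ t) (hs : |s| ≤ a * t) :
    1 + rexp (2 * s + t ^ 2) - 2 * rexp s ≤ 3 * t ^ 2 * rexp (a ^ 2 + 2 * t ^ 2) := by
  have hat : 0 ≤ a * t := mul_nonneg ha ht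
  have hlin : |rexp s - 1| ≤ a * t * rexp (a * t) :=
    (abs_exp_sub_one_le_abs_mul_exp_abs s).trans
      (mul_le_mul hs (exp_le_exp.2 hs) (exp_pos _).le hat)
  have hfirst : (rexp s - 1) ^ 2 ≤ (a * t) ^ 2 * rexp (2 * (a * t)) := by
    calc (rexp s - 1) ^ 2 = |rexp s - 1| ^ 2 := (sq_abs _).symm
      _ ≤ (a * t * rexp (a * t)) ^ 2 := by gcongr
      _ = (a * t) ^ 2 * rexp (2 * (a * t)) := by rw [mul_pow, ← exp_nat_mul]; norm_num
  have hsecond :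
      rexp (2 * s) * (rexp (t ^ 2) - 1) ≤ rexp (2 * (a * t)) * (t ^ 2 * rexp (t ^ 2)) := by
    have h := abs_exp_sub_one_le_abs_mul_exp_abs (t ^ 2)
    have h0 : 0 ≤ rexp (t ^ 2) - 1 := sub_nonneg.2 (one_le_exp (by positivity))
    rw [abs_of_nonneg h0, abs_of_nonneg (by positivity)] at h
    exact mul_le_mul (exp_le_exp.2 (by linarith [le_abs_self s])) h h0 (exp_pos _).le
  have hcross : a ^ 2 * rexp (2 * (a * t)) ≤ 2 * rexp (a ^ 2 + 2 * t ^ 2) := by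
    have hpoly : a ^ 2 ≤ 2 * rexp (a ^ 2 / 2) := by linarith [add_one_le_exp (a ^ 2 / 2)]
    have hexp : rexp (2 * (a * t)) ≤ rexp (a ^ 2 / 2 + 2 * t ^ 2) :=
      exp_le_exp.2 (by nlinarith [sq_nonneg (a - 2 * t)])
    calc a ^ 2 * rexp (2 * (a * t)) ≤ 2 * rexp (a ^ 2 / 2) * rexp (a ^ 2 / 2 + 2 * t ^ 2) :=
          mul_le_mul hpoly hexp (exp_pos _).le (by positivity)
      _ = 2 * rexp (a ^ 2 + 2 * t ^ 2) := by rw [mul_assoc, ← exp_add]; ring_nf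
  have hexp_mul : rexp (2 * (a * t)) * rexp (t ^ 2) ≤ rexp (a ^ 2 + 2 * t ^ 2) := by
    rw [← exp_add]; exact exp_le_exp.2 (by nlinarith [sq_nonneg (a - t)])
  calc 1 + rexp (2 * s + t ^ 2) - 2 * rexp s
      = (rexp s - 1) ^ 2 + rexp (2 * s) * (rexp (t ^ 2) - 1) := by
        rw [exp_add, two_mul, exp_add]; ring
    _ ≤ (a * t) ^ 2 * rexp (2 * (a * t)) + rexp (2 * (a * t)) * (t ^ 2 * rexp (t ^ 2)) :=
        add_le_add hfirst hsecond
    _ = t ^ 2 * (a ^ 2 * rexp (2 * (a * t))) + t ^ 2 * (rexp (2 * (a * t)) * rexp (t ^ 2)) := by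
        ring
    _ ≤ t ^ 2 * (2 * rexp (a ^ 2 + 2 * t ^ 2)) + t ^ 2 * rexp (a ^ 2 + 2 * t ^ 2) := by
        gcongr
    _ = 3 * t ^ 2 * rexp (a ^ 2 + 2 * t ^ 2) := by ring

lemma exp_add_exp_sub_two_exp_inner_le {F : Type*} [NormedAddCommGroup F] [InnerProductSpace ℝ F]
    (b b' : F) :
    rexp (‖b‖ ^ 2) + rexp (‖b'‖ ^ 2) - 2 * rexp ⟪b, b'⟫
      ≤ 3 * ‖b' - b‖ ^ 2 * rexp (2 * ‖b' - b‖ ^ 2 + 2 * ‖b‖ ^ 2) := by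
  have hnorm : ‖b'‖ ^ 2 = ‖b‖ ^ 2 + (2 * ⟪b, b' - b⟫ + ‖b' - b‖ ^ 2) := by
    rw [← add_assoc, ← norm_add_sq_real, add_sub_cancel]
  have hinner : ⟪b, b'⟫ = ‖b‖ ^ 2 + ⟪b, b' - b⟫ := by
    rw [inner_sub_right, real_inner_self_eq_norm_sq]; ring
  calc rexp (‖b‖ ^ 2) + rexp (‖b'‖ ^ 2) - 2 * rexp ⟪b, b'⟫
      = rexp (‖b‖ ^ 2) * (1 + rexp (2 * ⟪b, b' - b⟫ + ‖b' - b‖ ^ 2) - 2 * rexp ⟪b, b' - b⟫) := by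
        rw [hnorm, hinner]; simp only [exp_add]; ring
    _ ≤ rexp (‖b‖ ^ 2) * (3 * ‖b' - b‖ ^ 2 * rexp (‖b‖ ^ 2 + 2 * ‖b' - b‖ ^ 2)) := by
        gcongr
        exact one_add_exp_sub_two_exp_le (norm_nonneg _) (norm_nonneg _)
          (abs_real_inner_le_norm _ _)
    _ = 3 * ‖b' - b‖ ^ 2 * rexp (2 * ‖b' - b‖ ^ 2 + 2 * ‖b‖ ^ 2) := by
        rw [mul_left_comm, ← exp_add]; ring_nf

lemma toReal_eLpNorm_maxw_sub_div_mul_sqrt_le (ε : ℝ) (b b' : E3) :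
    (eLpNorm (fun v => (maxw b v - maxw b' v) / (ε * √(maxw 0 v))) 2).toReal
      ≤ |ε|⁻¹ * (√3 * ‖b' - b‖ * rexp (‖b' - b‖ ^ 2 + ‖b‖ ^ 2)) := by
  rw [toReal_eLpNorm_maxw_sub_div_mul_sqrt]
  gcongr
  rw [sqrt_le_left (by positivity), mul_pow, mul_pow, sq_sqrt zero_le_three, ← exp_nat_mul]
  convert exp_add_exp_sub_two_exp_inner_le b b' using 3
  push_cast; ring

lemma norm_emb (a : E2) : ‖emb a‖ = ‖a‖ := by
  simp [emb, EuclideanSpace.norm_eq, Fin.sum_univ_three, Fin.sum_univ_two, PiLp.single_apply]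

lemma emb_sub (a a' : E2) : emb (a - a') = emb a - emb a' := by
  ext i
  fin_cases i <;> simp [emb]

lemma toReal_eLpNorm_maxw_smul_emb_sub_le {ε : ℝ} (hε : ε ≠ 0) (a a' : E2) :
    (eLpNorm (fun v => (maxw (ε • emb a) v - maxw (ε • emb a') v) / (ε * √(maxw 0 v))) 2).toReal
      ≤ √3 * ‖a' - a‖ * rexp (ε ^ 2 * ‖a' - a‖ ^ 2 + ε ^ 2 * ‖a‖ ^ 2) := by
  have hsub : ‖ε • emb a' - ε • emb a‖ = |ε| * ‖a' - a‖ := by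
    rw [← smul_sub, ← emb_sub, norm_smul, norm_emb, norm_eq_abs]
  have hsmul : ‖ε • emb a‖ = |ε| * ‖a‖ := by rw [norm_smul, norm_emb, norm_eq_abs]
  refine (toReal_eLpNorm_maxw_sub_div_mul_sqrt_le ε _ _).trans_eq ?_
  rw [hsub, hsmul, mul_pow, mul_pow, sq_abs]
  field_simp

lemma ae_norm_le_toReal_eLpNorm_top {α F : Type*} [MeasurableSpace α] {μ : Measure α}
    [NormedAddCommGroup F] {f : α → F} {B : ℝ} (hB : ∀ x, ‖f x‖ ≤ B) :
    ∀ᵐ x ∂μ, ‖f x‖ ≤ (eLpNorm f ⊤ μ).toReal := by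
  rw [eLpNorm_exponent_top]
  have hfin := (eLpNormEssSup_lt_top_of_ae_bound (μ := μ) (ae_of_all _ hB)).ne
  filter_upwards [ae_le_eLpNormEssSup (f := f) (μ := μ)] with x hx
  simpa using ENNReal.toReal_mono hfin hx

/-- there is a universal `C > 0` such that for all `p ∈ [1,∞]`, `ε ∈ (0,1]`
and bounded measurable `u, w : 𝕋² → ℝ²`,
`‖ ‖(M_{εŵ} − M_{εû})/(ε √M₀)‖_{L²_v} ‖_{L^p_x}
  ≤ C ‖w − u‖_{L^p} exp(ε²‖u−w‖²_{L^∞} + ε²‖w‖²_{L^∞})`. -/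
theorem stmt19 :
    ∃ C : ℝ, 0 < C ∧
      ∀ p : ℝ≥0∞, 1 ≤ p → ∀ ε : ℝ, 0 < ε → ε ≤ 1 →
      ∀ u w : ℝ × ℝ → E2,
        Measurable u → Measurable w → ZZper u → ZZper w →
        (∃ Bu : ℝ, ∀ x, ‖u x‖ ≤ Bu) → (∃ Bw : ℝ, ∀ x, ‖w x‖ ≤ Bw) →
        eLpNorm (fun x =>
            (eLpNorm (fun v : E3 =>
                (maxw (ε • emb (w x)) v - maxw (ε • emb (u x)) v)
                  / (ε * Real.sqrt (maxw 0 v))) 2 (volume : Measure E3)).toReal) p μT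
          ≤ ENNReal.ofReal
              (C * Real.exp (ε ^ 2 * ((eLpNorm (fun x => u x - w x) ⊤ μT).toReal) ^ 2
                  + ε ^ 2 * ((eLpNorm w ⊤ μT).toReal) ^ 2))
            * eLpNorm (fun x => w x - u x) p μT := by
  refine ⟨√3, by positivity, ?_⟩
  rintro p - ε hε - u w - - - - ⟨Bu, hBu⟩ ⟨Bw, hBw⟩
  refine eLpNorm_le_mul_eLpNorm_of_ae_le_mul ?_ p
  have hBdiff (x : ℝ × ℝ) : ‖u x - w x‖ ≤ Bu + Bw :=
    (norm_sub_le _ _).trans (add_le_add (hBu x) (hBw x))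
  filter_upwards [ae_norm_le_toReal_eLpNorm_top (μ := μT) hBdiff,
    ae_norm_le_toReal_eLpNorm_top (μ := μT) hBw] with x hdiff hw
  rw [norm_of_nonneg ENNReal.toReal_nonneg, norm_sub_rev (w x), mul_right_comm]
  refine (toReal_eLpNorm_maxw_smul_emb_sub_le hε.ne' (w x) (u x)).trans ?_
  gcongr
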